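/- arXiv:cs/0609015 — 7 statements merged into one kernel-verified Lean document; each statement's English description precedes it below -/
import Mathlib

section
/- Let A = (Q, F, Q_f, Δ) be a bottom-up finite tree automaton and let L = L(A). Then for every term t ∈ T(F), the bottom-up residual of L w.r.t. t is the union of the state languages of the states reached by t: t⁻¹L = ⋃ { C_q : q ∈ Q, t →*_A q }. -/
/-- Terms over a ranked alphabet `F` with arity function `arity`. -/
inductive Term (F : Type) (arity : F → ℕ) : Type where
  | node (f : F) (children : Fin (arity f) → Term F arity) : Term F arity

/-- Contexts: terms with exactly one occurrence of the hole `◇`. -/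
inductive Ctx (F : Type) (arity : F → ℕ) : Type where
  | hole : Ctx F arity
  | node (f : F) (i : Fin (arity f)) (c : Ctx F arity)
      (sib : (j : Fin (arity f)) → j ≠ i → Term F arity) : Ctx F arity

/-- `c.fill t` replaces the hole of `c` by the term `t`. -/
def Ctx.fill {F : Type} {arity : F → ℕ} : Ctx F arity → Term F arity → Term F arity
  | .hole, t => t
  | .node f i c sib, t => .node f (fun j => if h : j = i then c.fill t else sib j h)

/-- Bottom-up residual of the tree language `L` w.r.t. the term `t`:
the set of contexts `c` with `c[t] ∈ L`. -/
def bres {F : Type} {arity : F → ℕ} (L : Set (Term F arity)) (t : Term F arity) :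
    Set (Ctx F arity) := {c | c.fill t ∈ L}

/-- Bottom-up finite tree automaton with state type `Q`:
final states and a set of rules `f(q₁,…,qₙ) → q`. -/
structure BUTA (F : Type) (arity : F → ℕ) (Q : Type) where
  final : Set Q
  rules : (f : F) → (Fin (arity f) → Q) → Q → Prop

/-- Reachability `t →*_A q`. -/
inductive BUTA.Reach {F Q : Type} {arity : F → ℕ} (A : BUTA F arity Q) :
    Term F arity → Q → Prop
  | node {f : F} {ch : Fin (arity f) → Term F arity} {qs : Fin (arity f) → Q} {q : Q} :
      A.rules f qs q → (∀ i, A.Reach (ch i) (qs i)) → A.Reach (.node f ch) q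

/-- Language recognized by a bottom-up tree automaton. -/
def BUTA.lang {F Q : Type} {arity : F → ℕ} (A : BUTA F arity Q) : Set (Term F arity) :=
  {t | ∃ q ∈ A.final, A.Reach t q}

/-- `A.CReach q0 c q` : putting state `q0` in the hole of `c`, the automaton can reach `q`
at the root (extending `→*_A` to terms over `F ∪ Q` by `q →*_A q`). -/
inductive BUTA.CReach {F Q : Type} {arity : F → ℕ} (A : BUTA F arity Q) (q0 : Q) :
    Ctx F arity → Q → Prop
  | hole : A.CReach q0 .hole q0
  | node {f : F} {i : Fin (arity f)} {c : Ctx F arity}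
      {sib : (j : Fin (arity f)) → j ≠ i → Term F arity}
      {qs : Fin (arity f) → Q} {q : Q} :
      A.rules f qs q → A.CReach q0 c (qs i) →
      (∀ j (h : j ≠ i), A.Reach (sib j h) (qs j)) →
      A.CReach q0 (.node f i c sib) q

/-- State language `C_q`: the set of contexts accepted by the state `q`. -/
def BUTA.stateLang {F Q : Type} {arity : F → ℕ} (A : BUTA F arity Q) (q : Q) :
    Set (Ctx F arity) := {c | ∃ qf ∈ A.final, A.CReach q c qf}

/-- A bottom-up automaton is deterministic iff no two rules share a left-hand side. -/
def BUTA.Deterministic {F Q : Type} {arity : F → ℕ} (A : BUTA F arity Q) : Prop :=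
  ∀ (f : F) (qs : Fin (arity f) → Q) (q q' : Q), A.rules f qs q → A.rules f qs q' → q = q'

/-- Bottom-up residual finite tree automaton: each state language is a residual of `L(A)`. -/
def IsRFTA {F Q : Type} {arity : F → ℕ} (A : BUTA F arity Q) : Prop :=
  ∀ q : Q, ∃ t : Term F arity, A.stateLang q = bres A.lang t

lemma reach_fill_iff {F Q : Type} {arity : F → ℕ} (A : BUTA F arity Q)
    (t : Term F arity) (c : Ctx F arity) (q : Q) :
    A.Reach (c.fill t) q ↔ ∃ q0, A.Reach t q0 ∧ A.CReach q0 c q := by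
  induction c generalizing q with
  | hole =>
    simp only [Ctx.fill]
    constructor
    · exact fun h => ⟨q, h, .hole⟩
    · rintro ⟨q0, h, hc⟩; cases hc; exact h
  | node f i c sib ih =>
    constructor
    · intro h
      rcases h with @⟨_, _, qs, _, hr, hch⟩
      have hi := hch i
      simp only [dif_pos rfl] at hi
      rcases (ih _).1 hi with ⟨q0, ht, hc⟩
      refine ⟨q0, ht, .node hr hc fun j hj => ?_⟩
      have := hch j
      simpa [dif_neg hj] using this
    · rintro ⟨q0, ht, hc⟩
      rcases hc with _ | @⟨_, _, _, _, qs, _, hr, hc, hsib⟩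
      refine .node hr fun j => ?_
      by_cases hj : j = i
      · subst hj; simpa [Ctx.fill] using (ih _).2 ⟨q0, ht, hc⟩
      · simpa [Ctx.fill, dif_neg hj] using hsib j hj

/-- For a bottom-up FTA `A` with `L = L(A)` and any term `t`,
`t⁻¹L = ⋃ { C_q : q ∈ Q, t →*_A q }`. -/
theorem residual_eq_iUnion_stateLang {F Q : Type} [Fintype F] [Fintype Q] {arity : F → ℕ}
    (_hconst : ∃ a : F, arity a = 0) (A : BUTA F arity Q) (t : Term F arity) :
    bres A.lang t = ⋃ q ∈ {q : Q | A.Reach t q}, A.stateLang q := by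
  ext c
  simp only [bres, BUTA.lang, BUTA.stateLang, Set.mem_setOf_eq, Set.mem_iUnion]
  constructor
  · rintro ⟨qf, hqf, hr⟩
    rcases (reach_fill_iff A t c qf).1 hr with ⟨q0, ht, hc⟩
    exact ⟨q0, ht, qf, hqf, hc⟩
  · rintro ⟨q0, ht, qf, hqf, hc⟩
    exact ⟨qf, hqf, (reach_fill_iff A t c qf).2 ⟨q0, ht, hc⟩⟩
end

section
/- The class of tree languages recognized by bottom-up residual finite tree automata is exactly the class of regular tree languages: a tree language L ⊆ T(F) is recognized by some ↑-RFTA if and only if L is recognized by some ↑-FTA. -/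
section Aux

variable {F Q : Type} {arity : F → ℕ} (A : BUTA F arity Q)

lemma reach_fill {t : Term F arity} {q0 : Q} {c : Ctx F arity} {q : Q}
    (hc : A.CReach q0 c q) (ht : A.Reach t q0) : A.Reach (c.fill t) q := by
  induction hc with
  | hole => exact ht
  | @node f i c sib qs q hr _ hsib ih =>
    refine .node hr (fun j => ?_)
    rcases eq_or_ne j i with h | h
    · subst h; rw [dif_pos rfl]; exact ih
    · rw [dif_neg h]; exact hsib j h

lemma fill_reach {c : Ctx F arity} {t : Term F arity} {q : Q}
    (h : A.Reach (c.fill t) q) : ∃ q0, A.Reach t q0 ∧ A.CReach q0 c q := by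
  induction c generalizing q with
  | hole => exact ⟨q, h, .hole⟩
  | node f i c sib ih =>
    cases h with
    | @node _ _ qs _ hr hch =>
      obtain ⟨q0, ht, hc⟩ := ih (by simpa using hch i)
      exact ⟨q0, ht, .node hr hc (fun j hj => by simpa [hj] using hch j)⟩

/-- The set of states reachable for a term. -/
def rset (t : Term F arity) : Set Q := {q | A.Reach t q}

lemma rset_node (f : F) (ch : Fin (arity f) → Term F arity) :
    rset A (.node f ch) = {q | ∃ qs, (∀ i, qs i ∈ rset A (ch i)) ∧ A.rules f qs q} := by
  ext q
  constructor
  · intro h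
    cases h with
    | node hr hc => exact ⟨_, hc, hr⟩
  · rintro ⟨qs, h1, h2⟩
    exact .node h2 h1

/-- The reachable-subset determinization of `A`. -/
def detA : BUTA F arity {S : Set Q // ∃ t, S = rset A t} where
  final := {s | ∃ q ∈ A.final, q ∈ s.1}
  rules f ss s := s.1 = {q | ∃ qs, (∀ i, qs i ∈ (ss i).1) ∧ A.rules f qs q}

lemma det_reach_val {t : Term F arity} {s} (h : (detA A).Reach t s) : s.1 = rset A t := by
  induction h with
  | @node f ch qs q hr _ ih =>
    rw [rset_node]
    have hr' : q.1 = {x | ∃ qs', (∀ i, qs' i ∈ (qs i).1) ∧ A.rules f qs' x} := hr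
    rw [hr']
    simp only [ih]

lemma det_reach_self (t : Term F arity) : (detA A).Reach t ⟨rset A t, t, rfl⟩ := by
  induction t with
  | node f ch ih =>
    exact .node (qs := fun i => ⟨rset A (ch i), ch i, rfl⟩)
      (show _ = _ from rset_node A f ch) ih

lemma det_lang : (detA A).lang = A.lang := by
  ext t
  constructor
  · rintro ⟨s, ⟨q, hqf, hq⟩, hr⟩
    rw [det_reach_val A hr] at hq
    exact ⟨q, hqf, hq⟩
  · rintro ⟨q, hqf, hq⟩
    exact ⟨⟨rset A t, t, rfl⟩, ⟨q, hqf, hq⟩, det_reach_self A t⟩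

lemma det_rfta : IsRFTA (detA A) := by
  rintro ⟨S, t, rfl⟩
  refine ⟨t, ?_⟩
  ext c
  constructor
  · rintro ⟨sf, hsf, hc⟩
    exact ⟨sf, hsf, reach_fill _ hc (det_reach_self A t)⟩
  · rintro ⟨sf, hsf, hr⟩
    obtain ⟨s0, ht, hc⟩ := fill_reach _ hr
    have hs0 : s0 = ⟨rset A t, t, rfl⟩ := Subtype.ext (det_reach_val A ht)
    exact ⟨sf, hsf, hs0 ▸ hc⟩

end Aux

/-- A tree language is recognized by some ↑-RFTA iff it is regular,
i.e. recognized by some ↑-FTA. -/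
theorem rfta_recognizable_iff_regular {F : Type} [Fintype F] {arity : F → ℕ}
    (_hconst : ∃ a : F, arity a = 0) (L : Set (Term F arity)) :
    (∃ (Q : Type) (_ : Fintype Q) (A : BUTA F arity Q), IsRFTA A ∧ A.lang = L) ↔
      (∃ (Q : Type) (_ : Fintype Q) (A : BUTA F arity Q), A.lang = L) := by
  constructor
  · rintro ⟨Q, fQ, A, _, hL⟩
    exact ⟨Q, fQ, A, hL⟩
  · rintro ⟨Q, fQ, A, hL⟩
    classical
    exact ⟨{S : Set Q // ∃ t, S = rset A t}, inferInstance, detA A, det_rfta A,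
      by rw [det_lang, hL]⟩
end

section
/- For every n ≥ 1, every deterministic bottom-up finite tree automaton recognizing L_n (the language of terms over {f(,), a} with at least one root-to-leaf path of length n) has at least 2^n states. Hence the size of the smallest ↑-DFTA recognizing L_n is exponential in n, while L_n is recognized by a ↑-RFTA with n+2 states. -/
/-- The ranked alphabet `{f(,), a}`. -/
inductive Symb : Type where
  | f : Symb
  | a : Symb

@[reducible] def ar : Symb → ℕ
  | .f => 2
  | .a => 0

/-- The multiset of lengths (numbers of edges) of all root-to-leaf paths of a term. -/
def leafDepths : Term Symb ar → Multiset ℕ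
  | .node .a _ => {0}
  | .node .f ch =>
      ((leafDepths (ch 0)).map (· + 1)) + ((leafDepths (ch 1)).map (· + 1))

/-- `L_n`: terms over `{f(,), a}` with at least one root-to-leaf path of length `n`. -/
def Ln (n : ℕ) : Set (Term Symb ar) := {t | n ∈ leafDepths t}

/-- States of `A_n`: `none` is `q_*`, `some k` is `q_k` for `0 ≤ k ≤ n`. -/
abbrev Qn (n : ℕ) : Type := Option (Fin (n + 1))

def AnRules (n : ℕ) : (g : Symb) → (Fin (ar g) → Qn n) → Qn n → Prop
  | .a, _, q => q = none ∨ q = some (Fin.last n)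
  | .f, qs, q =>
      (qs 0 = none ∧ qs 1 = none ∧ q = none) ∨
      (∃ k, ∃ _h1 : 1 ≤ k, ∃ h2 : k ≤ n,
        ((qs 0 = some ⟨k, Nat.lt_succ_of_le h2⟩ ∧ qs 1 ≠ some ⟨0, Nat.succ_pos n⟩) ∨
         (qs 1 = some ⟨k, Nat.lt_succ_of_le h2⟩ ∧ qs 0 ≠ some ⟨0, Nat.succ_pos n⟩)) ∧
        (q = some ⟨k - 1, by omega⟩ ∨ q = none))

/-- The automaton `A_n`. -/
def An (n : ℕ) : BUTA Symb ar (Qn n) where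
  final := {some ⟨0, Nat.succ_pos n⟩}
  rules := AnRules n

/-!
Lower bound: a term reaching a state `q` of a deterministic automaton has residual `C_q`, so
pairwise distinct residuals force distinct states. For `S ⊆ {1, …, n}` the term `comb S (n+1) 0`
has leaf depths `S ∪ {n + 1}`, and the chain context with its hole at depth `n - k` separates
these residuals according to whether `k ∈ S`: `2 ^ n` distinct residuals. Every term reaches
a state since `n ≥ 1`: the chain context of length `n` completes it into `L_n`.

Upper bound: the automaton counting path lengths bottom-up, with states `q_0, …, q_n` and a sink
`q_*`, recognises `L_n`. Its state language `C_{q_k}` is the residual of the perfect tree of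
depth `k`, because the sink's contexts are accepted from every state, and `C_{q_*}` is that of
the perfect tree of depth `n + 1`.
-/

namespace BUTA

variable {F Q : Type} {arity : F → ℕ} {A : BUTA F arity Q}

theorem CReach.reach_fill {t : Term F arity} {c : Ctx F arity} {q₀ q : Q}
    (hc : A.CReach q₀ c q) (ht : A.Reach t q₀) : A.Reach (c.fill t) q := by
  induction hc with
  | hole => exact ht
  | @node f i c sib qs q hr _ hsib ih =>
    refine .node hr fun j => ?_
    by_cases h : j = i
    · subst h; simpa [Ctx.fill] using ih
    · simpa [Ctx.fill, h] using hsib j h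

theorem exists_reach_creach_of_reach_fill {c : Ctx F arity} {t : Term F arity} {q : Q}
    (h : A.Reach (c.fill t) q) : ∃ q₀, A.Reach t q₀ ∧ A.CReach q₀ c q := by
  induction c generalizing q with
  | hole => exact ⟨q, h, .hole⟩
  | node f i c sib ih =>
    cases h with
    | node hr hch =>
      obtain ⟨q₀, ht, hc⟩ := ih (by simpa using hch i)
      exact ⟨q₀, ht, .node hr hc fun j hj => by simpa [hj] using hch j⟩

theorem exists_reach_of_fill_mem_lang {c : Ctx F arity} {t : Term F arity}
    (h : c.fill t ∈ A.lang) : ∃ q, A.Reach t q := by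
  obtain ⟨_, _, hr⟩ := h
  obtain ⟨q, ht, _⟩ := exists_reach_creach_of_reach_fill hr
  exact ⟨q, ht⟩

theorem Reach.unique (hdet : A.Deterministic) {t : Term F arity} {q q' : Q}
    (h : A.Reach t q) (h' : A.Reach t q') : q = q' := by
  induction h generalizing q' with
  | @node f ch qs q hr _ ih =>
    cases h' with
    | node hr' hch' =>
      obtain rfl : qs = _ := funext fun i => ih i (hch' i)
      exact hdet _ _ _ _ hr hr'

theorem bres_lang_eq_of_reach (hdet : A.Deterministic) {t t' : Term F arity} {q : Q}
    (ht : A.Reach t q) (ht' : A.Reach t' q) : bres A.lang t = bres A.lang t' := by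
  suffices ∀ {t t'}, A.Reach t q → A.Reach t' q → bres A.lang t ⊆ bres A.lang t' from
    (this ht ht').antisymm (this ht' ht)
  rintro t t' ht ht' c ⟨qf, hqf, hr⟩
  obtain ⟨q₀, ht₀, hc⟩ := exists_reach_creach_of_reach_fill hr
  obtain rfl := ht₀.unique hdet ht
  exact ⟨qf, hqf, hc.reach_fill ht'⟩

theorem card_le_card_of_injOn_bres [Fintype Q] (hdet : A.Deterministic) {ι : Type}
    (s : Finset ι) (t : ι → Term F arity) (hreach : ∀ i, ∃ q, A.Reach (t i) q)
    (hinj : Set.InjOn (fun i => bres A.lang (t i)) s) : s.card ≤ Fintype.card Q := by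
  choose φ hφ using hreach
  refine Finset.card_le_card_of_injOn φ (fun i _ => Finset.mem_univ _) fun i hi j hj hij => ?_
  exact hinj hi hj (bres_lang_eq_of_reach hdet (hφ i) (hij ▸ hφ j))

theorem stateLang_eq_bres_of_reach {t : Term F arity} {q : Q} (ht : A.Reach t q)
    (hmax : ∀ q', A.Reach t q' → A.stateLang q' ⊆ A.stateLang q) :
    A.stateLang q = bres A.lang t := by
  ext c
  constructor
  · rintro ⟨qf, hqf, hc⟩
    exact ⟨qf, hqf, hc.reach_fill ht⟩
  · rintro ⟨qf, hqf, hr⟩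
    obtain ⟨q', ht', hc⟩ := exists_reach_creach_of_reach_fill hr
    exact hmax q' ht' ⟨qf, hqf, hc⟩

end BUTA

namespace Term

def a : Term Symb ar := .node .a Fin.elim0

def f (l r : Term Symb ar) : Term Symb ar := .node .f ![l, r]

@[simp] theorem leafDepths_a : leafDepths a = {0} := rfl

@[simp] theorem leafDepths_f (l r : Term Symb ar) :
    leafDepths (f l r) = (leafDepths l).map (· + 1) + (leafDepths r).map (· + 1) := rfl

theorem succ_mem_leafDepths_f {l r : Term Symb ar} {d : ℕ} :
    d + 1 ∈ leafDepths (f l r) ↔ d ∈ leafDepths l ∨ d ∈ leafDepths r := by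
  simp

theorem mem_leafDepths_node_f {ch : Fin 2 → Term Symb ar} {d : ℕ} :
    d ∈ leafDepths (.node .f ch) ↔ ∃ i, ∃ d' ∈ leafDepths (ch i), d = d' + 1 := by
  simp only [leafDepths, Multiset.mem_add, Multiset.mem_map, Fin.exists_fin_two]
  grind

end Term

/-- The context `f(f(⋯f(◇, a)⋯, a), a)` with the hole at depth `d`. -/
def chainCtx : ℕ → Ctx Symb ar
  | 0 => .hole
  | d + 1 => .node .f 0 (chainCtx d) fun _ _ => Term.a

theorem chainCtx_succ_fill (d : ℕ) (t : Term Symb ar) :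
    (chainCtx (d + 1)).fill t = Term.f ((chainCtx d).fill t) Term.a := by
  simp only [chainCtx, Ctx.fill, Term.f]
  congr 1
  ext j
  fin_cases j <;> rfl

theorem mem_leafDepths_chainCtx_fill (t : Term Symb ar) (d m : ℕ) :
    m ∈ leafDepths ((chainCtx d).fill t) ↔
      (d ≤ m ∧ m - d ∈ leafDepths t) ∨ (1 ≤ m ∧ m ≤ d) := by
  induction d generalizing m with
  | zero =>
    simp only [chainCtx, Ctx.fill, zero_le, Nat.sub_zero, true_and, Nat.le_zero]
    exact (or_iff_left (by omega)).symm
  | succ d ih =>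
    rw [chainCtx_succ_fill]
    cases m with
    | zero => simp
    | succ m =>
      rw [Term.succ_mem_leafDepths_f, ih, Term.leafDepths_a, Multiset.mem_singleton,
        Nat.add_sub_add_right]
      by_cases hm : m - d ∈ leafDepths t <;> simp [hm] <;> omega

/-- A left spine of `m` nodes `f` starting at depth `j`, whose right child at depth `j + d` is
the leaf `a` if `j + d ∈ S` and a copy of the remaining spine otherwise. -/
def comb (S : Finset ℕ) : ℕ → ℕ → Term Symb ar
  | 0, _ => Term.a
  | m + 1, j => Term.f (comb S m (j + 1)) (if j + 1 ∈ S then Term.a else comb S m (j + 1))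

theorem mem_leafDepths_comb (S : Finset ℕ) (m j d : ℕ) :
    d ∈ leafDepths (comb S m j) ↔ d = m ∨ (1 ≤ d ∧ d ≤ m ∧ j + d ∈ S) := by
  induction m generalizing j d with
  | zero => simp only [comb, Term.leafDepths_a, Multiset.mem_singleton]; omega
  | succ m ih =>
    cases d with
    | zero => simp [comb]
    | succ d =>
      have hd0 : d = 0 → (j + 1 + d ∈ S ↔ j + 1 ∈ S) := by rintro rfl; rfl
      rw [comb, Term.succ_mem_leafDepths_f, show j + (d + 1) = j + 1 + d by omega]
      by_cases hS : j + 1 ∈ S <;> by_cases hd : j + 1 + d ∈ S <;>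
        simp [hS, hd, ih] at hd0 ⊢ <;> omega

theorem chainCtx_fill_mem_Ln_iff (t : Term Symb ar) (d n : ℕ) :
    (chainCtx d).fill t ∈ Ln n ↔ (d ≤ n ∧ n - d ∈ leafDepths t) ∨ (1 ≤ n ∧ n ≤ d) :=
  mem_leafDepths_chainCtx_fill t d n

theorem chainCtx_mem_bres_Ln_comb_iff {n : ℕ} (S : Finset ℕ) {k : ℕ}
    (hk : k ∈ Finset.Icc 1 n) :
    chainCtx (n - k) ∈ bres (Ln n) (comb S (n + 1) 0) ↔ k ∈ S := by
  obtain ⟨hk1, hkn⟩ := Finset.mem_Icc.1 hk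
  rw [bres, Set.mem_ofPred_eq, chainCtx_fill_mem_Ln_iff, mem_leafDepths_comb,
    Nat.sub_sub_self hkn, zero_add]
  constructor
  · rintro (⟨-, h | ⟨-, -, h⟩⟩ | h) <;> first | exact h | omega
  · exact fun h => Or.inl ⟨by omega, Or.inr ⟨hk1, by omega, h⟩⟩

theorem injOn_bres_Ln_comb (n : ℕ) :
    Set.InjOn (fun S => bres (Ln n) (comb S (n + 1) 0)) (Finset.Icc 1 n).powerset := by
  intro S₁ hS₁ S₂ hS₂ h
  rw [Finset.coe_powerset, Set.mem_preimage, Set.mem_powerset_iff, Finset.coe_subset] at hS₁ hS₂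
  ext k
  by_cases hk : k ∈ Finset.Icc 1 n
  · rw [← chainCtx_mem_bres_Ln_comb_iff S₁ hk, ← chainCtx_mem_bres_Ln_comb_iff S₂ hk]
    exact Set.ext_iff.1 h _
  · exact iff_of_false (fun h => hk (hS₁ h)) (fun h => hk (hS₂ h))

theorem two_pow_le_card_of_deterministic_of_lang_eq_Ln {n : ℕ} (hn : 1 ≤ n) {Q : Type}
    [Fintype Q] {A : BUTA Symb ar Q} (hdet : A.Deterministic) (hlang : A.lang = Ln n) :
    2 ^ n ≤ Fintype.card Q := by
  have hreach (t : Term Symb ar) : ∃ q, A.Reach t q :=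
    BUTA.exists_reach_of_fill_mem_lang (c := chainCtx n) <| hlang ▸
      (chainCtx_fill_mem_Ln_iff t n n).2 (Or.inr ⟨hn, le_rfl⟩)
  have hcard := BUTA.card_le_card_of_injOn_bres hdet _ _ (fun S => hreach _)
    (hlang ▸ injOn_bres_Ln_comb n)
  rwa [Finset.card_powerset, Nat.card_Icc, Nat.add_sub_cancel] at hcard

def perfect : ℕ → Term Symb ar
  | 0 => Term.a
  | d + 1 => Term.f (perfect d) (perfect d)

theorem mem_leafDepths_perfect {d m : ℕ} : m ∈ leafDepths (perfect d) ↔ m = d := by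
  induction d generalizing m with
  | zero => simp [perfect]
  | succ d ih => cases m <;> simp [perfect, ih, eq_comm]

/-- `some k` means "has a path of length `k`"; `none` is a sink reachable from every term. -/
def pathRules (n : ℕ) : (g : Symb) → (Fin (ar g) → Qn n) → Qn n → Prop
  | .a, _, q => q = none ∨ q = some 0
  | .f, qs, q => q = none ∨ ∃ i k k', qs i = some k ∧ q = some k' ∧ (k' : ℕ) = k + 1

def pathAut (n : ℕ) : BUTA Symb ar (Qn n) where
  final := {some (Fin.last n)}
  rules := pathRules n

namespace pathAut

variable {n : ℕ}

theorem reach_none (t : Term Symb ar) : (pathAut n).Reach t none := by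
  induction t with
  | node g ch ih =>
    cases g with
    | a =>
      exact .node (f := Symb.a) (ch := ch) (qs := fun i => i.elim0) (Or.inl rfl) fun i => i.elim0
    | f => exact .node (qs := fun _ => none) (Or.inl rfl) ih

theorem mem_leafDepths_of_reach {t : Term Symb ar} {k : Fin (n + 1)}
    (h : (pathAut n).Reach t (some k)) : (k : ℕ) ∈ leafDepths t := by
  generalize hq : some k = q at h
  induction h generalizing k with
  | @node g ch qs q hr _ ih =>
    subst hq
    cases g with
    | a =>
      obtain hr | hr := hr
      · simp at hr
      · simp [leafDepths, Option.some_inj.1 hr]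
    | f =>
      obtain hr | ⟨i, k, k', hk, hr, hk'⟩ := hr
      · simp at hr
      obtain rfl := Option.some_inj.1 hr
      exact Term.mem_leafDepths_node_f.2 ⟨i, k, ih i hk.symm, hk'⟩

theorem reach_of_mem_leafDepths {t : Term Symb ar} {k : Fin (n + 1)}
    (h : (k : ℕ) ∈ leafDepths t) : (pathAut n).Reach t (some k) := by
  induction t generalizing k with
  | node g ch ih =>
    cases g with
    | a =>
      obtain rfl : k = 0 := Fin.ext (Multiset.mem_singleton.1 h)
      exact .node (f := Symb.a) (ch := ch) (qs := fun i => i.elim0) (Or.inr rfl) fun i => i.elim0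
    | f =>
      obtain ⟨i, d, hd, hk⟩ := Term.mem_leafDepths_node_f.1 h
      let k' : Fin (n + 1) := ⟨d, by omega⟩
      let qs := Function.update (fun _ => none) i (some k')
      have hr : pathRules n .f qs (some k) := Or.inr ⟨i, k', k, by simp [qs], rfl, hk⟩
      refine .node hr fun j => ?_
      by_cases hj : j = i
      · subst hj; simpa [qs] using ih j hd
      · simpa [qs, hj] using reach_none (ch j)

theorem reach_some_iff {t : Term Symb ar} {k : Fin (n + 1)} :
    (pathAut n).Reach t (some k) ↔ (k : ℕ) ∈ leafDepths t :=
  ⟨mem_leafDepths_of_reach, reach_of_mem_leafDepths⟩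

theorem lang_eq : (pathAut n).lang = Ln n := by
  ext t
  constructor
  · rintro ⟨q, rfl, h⟩
    exact mem_leafDepths_of_reach h
  · exact fun h => ⟨_, rfl, reach_of_mem_leafDepths (k := Fin.last n) h⟩

theorem exists_creach (q₀ : Qn n) (c : Ctx Symb ar) : ∃ q, (pathAut n).CReach q₀ c q := by
  induction c with
  | hole => exact ⟨q₀, .hole⟩
  | node g i c sib ih =>
    obtain ⟨q, hc⟩ := ih
    cases g with
    | a => exact i.elim0
    | f =>
      refine ⟨none, .node (qs := Function.update (fun _ => none) i q) (Or.inl rfl) (by simpa)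
        fun j hj => ?_⟩
      simpa [hj] using reach_none (sib j hj)

/-- A counting state at the root that does not come through the hole's branch comes from a
sibling, and then the hole's branch may run from any state. -/
theorem creach_of_creach_none {c : Ctx Symb ar} {q : Qn n} (h : (pathAut n).CReach none c q)
    (hq : q ≠ none) (q₀ : Qn n) : (pathAut n).CReach q₀ c q := by
  induction h with
  | hole => exact absurd rfl hq
  | @node g i c sib qs q hr hc hsib ih =>
    cases g with
    | a => exact i.elim0
    | f =>
      obtain hr' | ⟨i', k, k', hk, hq', hk'⟩ := id hr
      · exact absurd hr' hq
      by_cases hi : i' = i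
      · subst hi
        exact .node hr (ih (by simp [hk])) hsib
      · obtain ⟨q', hc'⟩ := exists_creach q₀ c
        have hr'' : pathRules n .f (Function.update qs i q') q :=
          Or.inr ⟨i', k, k', by simpa [hi] using hk, hq', hk'⟩
        exact .node hr'' (by simpa using hc') fun j hj => by simpa [hj] using hsib j hj

theorem stateLang_none_subset (q : Qn n) :
    (pathAut n).stateLang none ⊆ (pathAut n).stateLang q := by
  rintro c ⟨qf, rfl, hc⟩
  exact ⟨_, rfl, creach_of_creach_none hc (by simp) q⟩

theorem isRFTA : IsRFTA (pathAut n) := by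
  rintro (_ | k)
  · refine ⟨perfect (n + 1), BUTA.stateLang_eq_bres_of_reach (reach_none _) ?_⟩
    rintro (_ | j) hj
    · exact subset_rfl
    · have := mem_leafDepths_perfect.1 (reach_some_iff.1 hj)
      omega
  · refine ⟨perfect k, BUTA.stateLang_eq_bres_of_reach
      (reach_some_iff.2 (mem_leafDepths_perfect.2 rfl)) ?_⟩
    rintro (_ | j) hj
    · exact stateLang_none_subset _
    · rw [Fin.ext (mem_leafDepths_perfect.1 (reach_some_iff.1 hj))]

end pathAut

/-- For every `n ≥ 1`, every deterministic bottom-up FTA recognizing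
`L_n` has at least `2^n` states, while `L_n` is recognized by some ↑-RFTA with `n+2`
states. -/
theorem dfta_for_Ln_needs_exp_states (n : ℕ) (hn : 1 ≤ n) :
    (∀ (Q : Type) [Fintype Q] (A : BUTA Symb ar Q),
      A.Deterministic → A.lang = Ln n → 2 ^ n ≤ Fintype.card Q) ∧
    (∃ (Q : Type) (_ : Fintype Q) (A : BUTA Symb ar Q),
      IsRFTA A ∧ A.lang = Ln n ∧ Fintype.card Q = n + 2) :=
  ⟨fun _ _ _ hdet hlang => two_pow_le_card_of_deterministic_of_lang_eq_Ln hn hdet hlang,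
    ⟨Qn n, inferInstance, pathAut n, pathAut.isRFTA, pathAut.lang_eq, by simp⟩⟩
end

section
/- Let L be a tree language over F, let f ∈ F have arity n, and let t₁,…,tₙ be terms such that for each i, tᵢ⁻¹L = ⋃_{jᵢ} t_{i,jᵢ}⁻¹L for finite families of terms t_{i,1},…,t_{i,mᵢ}. Then f(t₁,…,tₙ)⁻¹L = ⋃_{j₁,…,jₙ} f(t_{1,j₁},…,t_{n,jₙ})⁻¹L, where the union ranges over all combinations of indices j₁,…,jₙ. -/
/-- Composition of contexts: plug `d` into the hole of `c`. -/
def Ctx.comp {F : Type} {arity : F → ℕ} : Ctx F arity → Ctx F arity → Ctx F arity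
  | .hole, d => d
  | .node f i c sib, d => .node f i (c.comp d) sib

lemma Ctx.fill_comp {F : Type} {arity : F → ℕ} (c d : Ctx F arity) (t : Term F arity) :
    (c.comp d).fill t = c.fill (d.fill t) := by
  induction c with
  | hole => rfl
  | node f i c sib ih => simp [Ctx.comp, Ctx.fill, ih]

/-- Extend a context by descending into child `a` of an `f`-node whose other children
come from `u`. -/
def Ctx.ext {F : Type} {arity : F → ℕ} (c : Ctx F arity) (f : F) (a : Fin (arity f))
    (u : Fin (arity f) → Term F arity) : Ctx F arity :=
  c.comp (.node f a .hole (fun j _ => u j))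

lemma Ctx.fill_ext {F : Type} {arity : F → ℕ} (c : Ctx F arity) (f : F) (a : Fin (arity f))
    (u : Fin (arity f) → Term F arity) (t : Term F arity) :
    (c.ext f a u).fill t = c.fill (.node f (Function.update u a t)) := by
  rw [Ctx.ext, Ctx.fill_comp]
  congr 1
  show Term.node f _ = Term.node f _
  congr 1
  funext j
  by_cases hj : j = a <;> simp [Ctx.fill, hj, Function.update_apply]

lemma mem_bres_node {F : Type} {arity : F → ℕ} (L : Set (Term F arity)) (f : F)
    (u : Fin (arity f) → Term F arity) (a : Fin (arity f)) (c : Ctx F arity) :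
    c ∈ bres L (.node f u) ↔ c.ext f a u ∈ bres L (u a) := by
  simp [bres, Ctx.fill_ext, Function.update_eq_self]

lemma bres_node_step {F : Type} {arity : F → ℕ} (L : Set (Term F arity)) (f : F)
    (u : Fin (arity f) → Term F arity) (a : Fin (arity f)) {k : ℕ}
    (g : Fin k → Term F arity) (hu : bres L (u a) = ⋃ j, bres L (g j)) :
    bres L (.node f u) = ⋃ j : Fin k, bres L (.node f (Function.update u a (g j))) := by
  ext c
  rw [mem_bres_node L f u a c, hu]
  simp only [Set.mem_iUnion, bres, Set.mem_setOf_eq, Ctx.fill_ext]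

/-- If `tᵢ⁻¹L = ⋃_{jᵢ} t_{i,jᵢ}⁻¹L` for finite families of terms, then
`f(t₁,…,tₙ)⁻¹L = ⋃_{j₁,…,jₙ} f(t_{1,j₁},…,t_{n,jₙ})⁻¹L`, the union ranging over all
combinations of indices. -/
theorem bres_node_iUnion {F : Type} [Fintype F] {arity : F → ℕ}
    (_hconst : ∃ a : F, arity a = 0) (L : Set (Term F arity)) (f : F)
    (ts : Fin (arity f) → Term F arity) (m : Fin (arity f) → ℕ)
    (tf : (i : Fin (arity f)) → Fin (m i) → Term F arity)
    (h : ∀ i, bres L (ts i) = ⋃ j : Fin (m i), bres L (tf i j)) :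
    bres L (.node f ts) =
      ⋃ js : (i : Fin (arity f)) → Fin (m i),
        bres L (.node f (fun i => tf i (js i))) := by
  by_cases hpos : ∀ i, 0 < m i
  · haveI : ∀ i, Nonempty (Fin (m i)) := fun i => ⟨⟨0, hpos i⟩⟩
    have main : ∀ s : Finset (Fin (arity f)),
        bres L (.node f ts) = ⋃ js : (i : Fin (arity f)) → Fin (m i),
          bres L (.node f (fun i => if i ∈ s then tf i (js i) else ts i)) := by
      intro s
      induction s using Finset.induction_on with
      | empty =>
        simp only [Finset.notMem_empty, if_false]
        rw [Set.iUnion_const]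
      | @insert a s ha ih =>
        rw [ih]
        ext c
        simp only [Set.mem_iUnion]
        constructor
        · rintro ⟨js, hc⟩
          have hstep := bres_node_step L f (fun i => if i ∈ s then tf i (js i) else ts i)
            a (tf a) (by simpa [ha] using h a)
          rw [hstep] at hc
          simp only [Set.mem_iUnion] at hc
          obtain ⟨j, hj⟩ := hc
          refine ⟨Function.update js a j, ?_⟩
          convert hj using 3
          funext i
          by_cases hi : i = a
          · subst hi; simp
          · simp [Function.update_apply, hi, Finset.mem_insert]
        · rintro ⟨js, hc⟩
          refine ⟨js, ?_⟩
          have hstep := bres_node_step L f (fun i => if i ∈ s then tf i (js i) else ts i)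
            a (tf a) (by simpa [ha] using h a)
          rw [hstep]
          simp only [Set.mem_iUnion]
          refine ⟨js a, ?_⟩
          convert hc using 3
          funext i
          by_cases hi : i = a
          · subst hi; simp
          · simp [Function.update_apply, hi, Finset.mem_insert]
    simpa using main Finset.univ
  · push_neg at hpos
    obtain ⟨i0, hi0⟩ := hpos
    have hm : m i0 = 0 := by omega
    haveI : IsEmpty (Fin (m i0)) := by rw [hm]; infer_instance
    haveI : IsEmpty ((i : Fin (arity f)) → Fin (m i)) :=
      ⟨fun js => (this.false (js i0))⟩
    rw [Set.iUnion_of_empty]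
    ext c
    simp only [Set.mem_empty_iff_false, iff_false]
    intro hc
    rw [mem_bres_node L f ts i0 c, h i0, Set.iUnion_of_empty] at hc
    exact hc
end

section
/- Every trimmed top-down context-deterministic finite tree automaton is a top-down residual finite tree automaton: if A = (Q, F, I, Δ) is a ↓-CFTA in which every state q belongs to Q_c for some context c and has L_q ≠ ∅, then for every state q there exists a context c with L_q = c⁻¹L(A). -/
/-- Top-down residual of the tree language `L` w.r.t. the context `c`:
the set of terms `t` with `c[t] ∈ L`. -/
def tres {F : Type} {arity : F → ℕ} (L : Set (Term F arity)) (c : Ctx F arity) :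
    Set (Term F arity) := {t | c.fill t ∈ L}

/-- Top-down finite tree automaton with state type `Q`:
initial states and a set of rules `q(f) → f(q₁,…,qₙ)`. -/
structure TDTA (F : Type) (arity : F → ℕ) (Q : Type) where
  initial : Set Q
  rules : (f : F) → Q → (Fin (arity f) → Q) → Prop

/-- `A.Accepts q t`: the state `q` accepts the term `t`. -/
inductive TDTA.Accepts {F Q : Type} {arity : F → ℕ} (A : TDTA F arity Q) :
    Q → Term F arity → Prop
  | node {f : F} {q : Q} {qs : Fin (arity f) → Q} {ch : Fin (arity f) → Term F arity} :
      A.rules f q qs → (∀ i, A.Accepts (qs i) (ch i)) → A.Accepts q (.node f ch)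

/-- State language `L_q`: the set of terms accepted by the state `q`. -/
def TDTA.stateLang {F Q : Type} {arity : F → ℕ} (A : TDTA F arity Q) (q : Q) :
    Set (Term F arity) := {t | A.Accepts q t}

/-- Language recognized by a top-down tree automaton. -/
def TDTA.lang {F Q : Type} {arity : F → ℕ} (A : TDTA F arity Q) : Set (Term F arity) :=
  {t | ∃ q ∈ A.initial, A.Accepts q t}

/-- `A.CtxReach q c q'`: running from state `q` on the context `c`, the automaton can
label the hole position with `q'`, accepting every full subterm of `c` hanging off the
path to the hole from its assigned state. -/
inductive TDTA.CtxReach {F Q : Type} {arity : F → ℕ} (A : TDTA F arity Q) :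
    Q → Ctx F arity → Q → Prop
  | hole (q : Q) : A.CtxReach q .hole q
  | node {f : F} {q : Q} {qs : Fin (arity f) → Q} {i : Fin (arity f)} {c : Ctx F arity}
      {sib : (j : Fin (arity f)) → j ≠ i → Term F arity} {q' : Q} :
      A.rules f q qs → A.CtxReach (qs i) c q' →
      (∀ j (h : j ≠ i), A.Accepts (qs j) (sib j h)) →
      A.CtxReach q (.node f i c sib) q'

/-- `Q_c`: the set of states that `A` can reach at the hole position when running
from an initial state on the context `c`. -/
def TDTA.Qc {F Q : Type} {arity : F → ℕ} (A : TDTA F arity Q) (c : Ctx F arity) : Set Q :=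
  {q | ∃ qi ∈ A.initial, A.CtxReach qi c q}

/-- Top-down residual finite tree automaton: each state language is a top-down
residual of `L(A)`. -/
def IsTDRFTA {F Q : Type} {arity : F → ℕ} (A : TDTA F arity Q) : Prop :=
  ∀ q : Q, ∃ c : Ctx F arity, A.stateLang q = tres A.lang c


lemma TDTA.accepts_fill {F Q : Type} {arity : F → ℕ} (A : TDTA F arity Q)
    {q q' : Q} {c : Ctx F arity} (h : A.CtxReach q c q') {t : Term F arity}
    (ht : A.Accepts q' t) : A.Accepts q (c.fill t) := by
  induction h with
  | hole => exact ht
  | node hr hcrx hsib ih =>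
    rename_i f0 q0 qs i c1 sib1 q1
    exact TDTA.Accepts.node hr (fun j => by
      by_cases hj : j = i
      · subst hj; simpa [Ctx.fill] using ih ht
      · simpa [Ctx.fill, hj] using hsib j hj)

lemma TDTA.fill_decompose {F Q : Type} {arity : F → ℕ} (A : TDTA F arity Q)
    (c : Ctx F arity) : ∀ {q : Q} {t : Term F arity}, A.Accepts q (c.fill t) →
    ∃ q', A.CtxReach q c q' ∧ A.Accepts q' t := by
  induction c with
  | hole => exact fun h => ⟨_, TDTA.CtxReach.hole _, h⟩
  | node f i c sib ih =>
    intro q t h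
    cases h with
    | node hr hch =>
      obtain ⟨q', hcr, hq'⟩ := ih (by simpa using hch i)
      refine ⟨q', TDTA.CtxReach.node hr hcr (fun j hj => ?_), hq'⟩
      simpa [Ctx.fill, hj] using hch j

/-- Every trimmed top-down context-deterministic FTA (i.e. every `Q_c`
is empty or a singleton, every state lies in some `Q_c` and has nonempty state language)
is a ↓-RFTA: every state language is a top-down residual of `L(A)`. -/
theorem trimmed_cfta_isTDRFTA {F Q : Type} [Fintype F] [Fintype Q] {arity : F → ℕ}
    (_hconst : ∃ a : F, arity a = 0) (A : TDTA F arity Q)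
    (hcd : ∀ c : Ctx F arity, (A.Qc c).Subsingleton)
    (htrim : ∀ q : Q, (∃ c : Ctx F arity, q ∈ A.Qc c) ∧ (A.stateLang q).Nonempty) :
    ∀ q : Q, ∃ c : Ctx F arity, A.stateLang q = tres A.lang c := fun q => by
  obtain ⟨⟨c, qi, hqi, hcr⟩, _⟩ := htrim q
  refine ⟨c, Set.eq_of_subset_of_subset ?_ ?_⟩
  · intro t ht
    exact ⟨qi, hqi, A.accepts_fill hcr ht⟩
  · rintro t ⟨q0, hq0, hacc⟩
    obtain ⟨q', hcr', hq'⟩ := A.fill_decompose c hacc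
    have : q' = q := hcd c ⟨q0, hq0, hcr'⟩ ⟨qi, hqi, hcr⟩
    exact this ▸ hq'
end

section
/- Over the ranked alphabet {f(,), a, b, c}, the finite (hence regular) tree language L′ = {f(a,b), f(a,c), f(b,a), f(b,c), f(c,a), f(c,b)} is not recognized by any top-down residual finite tree automaton. Hence the class of ↓-RFTA-recognizable languages is strictly contained in the class of regular tree languages. -/
/-- The ranked alphabet `{f(,), a, b, c}`. -/
inductive Symb4 : Type where
  | f : Symb4
  | a : Symb4
  | b : Symb4
  | c : Symb4

@[reducible] def ar4 : Symb4 → ℕ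
  | .f => 2
  | _ => 0

def tA : Term Symb4 ar4 := .node .a Fin.elim0
def tB : Term Symb4 ar4 := .node .b Fin.elim0
def tC : Term Symb4 ar4 := .node .c Fin.elim0

def pair4 (t1 t2 : Term Symb4 ar4) : Fin (ar4 Symb4.f) → Term Symb4 ar4 := ![t1, t2]

/-- The language `L′ = {f(a,b), f(a,c), f(b,a), f(b,c), f(c,a), f(c,b)}`. -/
def L17 : Set (Term Symb4 ar4) :=
  {.node .f (pair4 tA tB), .node .f (pair4 tA tC), .node .f (pair4 tB tA),
   .node .f (pair4 tB tC), .node .f (pair4 tC tA), .node .f (pair4 tC tB)}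

/-!
Let `A` be a ↓-RFTA with `L(A) = L′`. Accepting `f(a,b)` uses a rule `q(f) → f(q₀,q₁)`
with `a ∈ L_{q₀}` and `b ∈ L_{q₁}`. Each `L_{qᵢ}` is a residual `c⁻¹L′` containing a constant,
which forces `c = f(◇,s)` or `c = f(s,◇)` for a constant `s`; such a residual contains both
constants other than `s`. Two such sets of constants meet in some `t`, so `A` accepts
`f(t,t) ∉ L′`.
-/

theorem Fin.injective_two_iff {α : Type*} (v : Fin 2 → α) : Function.Injective v ↔ v 0 ≠ v 1 := by
  refine ⟨fun h e => absurd (h e) (by decide), fun h i j hij => ?_⟩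
  fin_cases i <;> fin_cases j <;> simp_all [eq_comm]

def Term.root {F : Type} {arity : F → ℕ} : Term F arity → F
  | .node g _ => g

theorem Ctx.eq_hole_of_fill_eq_node {F : Type} {arity : F → ℕ} {c : Ctx F arity}
    {t : Term F arity} {g : F} {ch : Fin (arity g) → Term F arity}
    (h : c.fill t = .node g ch) (hg : arity g = 0) : c = .hole := by
  cases c with
  | hole => rfl
  | node g' i _ _ =>
    simp only [Ctx.fill, Term.node.injEq] at h
    obtain ⟨rfl, -⟩ := h
    exact (hg ▸ i).elim0

theorem tA_ne_tB : tA ≠ tB := by simp [tA, tB]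
theorem tA_ne_tC : tA ≠ tC := by simp [tA, tC]
theorem tB_ne_tC : tB ≠ tC := by simp [tB, tC]

def constTerms : Set (Term Symb4 ar4) := {tA, tB, tC}

theorem mem_constTerms_iff {t : Term Symb4 ar4} :
    t ∈ constTerms ↔ ∃ s ch, ar4 s = 0 ∧ t = .node s ch := by
  constructor
  · rintro (rfl | rfl | rfl) <;> exact ⟨_, _, rfl, rfl⟩
  · rintro ⟨s, ch, hs, rfl⟩
    cases s <;> simp [constTerms, tA, tB, tC, funext_iff] at hs ⊢

theorem root_injOn_constTerms : Set.InjOn Term.root constTerms := by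
  rintro x (rfl | rfl | rfl) y (rfl | rfl | rfl) h <;> first | rfl | cases h

theorem exists_mem_constTerms_ne_ne (s₀ s₁ : Term Symb4 ar4) :
    ∃ t ∈ constTerms, t ≠ s₀ ∧ t ≠ s₁ := by
  have hcard : ({s₀, s₁} : Set (Term Symb4 ar4)).ncard < constTerms.ncard := by
    rw [show constTerms.ncard = 3 from
      Set.ncard_eq_three.mpr ⟨tA, tB, tC, tA_ne_tB, tA_ne_tC, tB_ne_tC, rfl⟩]
    exact (Set.ncard_insert_le _ _).trans_lt (by simp)
  obtain ⟨t, ht, hts⟩ := Set.exists_mem_notMem_of_ncard_lt_ncard hcard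
  exact ⟨t, ht, by simpa [not_or] using hts⟩

theorem pair4_mem_L17_iff {x y : Term Symb4 ar4} :
    .node .f (pair4 x y) ∈ L17 ↔ x ∈ constTerms ∧ y ∈ constTerms ∧ x ≠ y := by
  simp only [L17, constTerms, pair4, Set.mem_insert_iff, Set.mem_singleton_iff, Term.node.injEq,
    heq_eq_eq, true_and, Matrix.vecCons_inj]
  have := tA_ne_tB; have := tA_ne_tC; have := tB_ne_tC
  grind

theorem node_mem_L17_iff (ch : Fin 2 → Term Symb4 ar4) :
    .node .f ch ∈ L17 ↔ (∀ j, ch j ∈ constTerms) ∧ ch 0 ≠ ch 1 := by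
  rw [Fin.forall_fin_two, and_assoc, ← pair4_mem_L17_iff]
  convert Iff.rfl using 3
  ext i; fin_cases i <;> rfl

theorem eq_f_of_node_mem_L17 {g : Symb4} {ch : Fin (ar4 g) → Term Symb4 ar4}
    (h : .node g ch ∈ L17) : g = .f := by
  simp only [L17, Set.mem_insert_iff, Set.mem_singleton_iff, Term.node.injEq] at h
  rcases h with h | h | h | h | h | h <;> exact h.1

theorem constTerm_notMem_L17 {x : Term Symb4 ar4} (hx : x ∈ constTerms) : x ∉ L17 := by
  obtain ⟨s, ch, hs, rfl⟩ := mem_constTerms_iff.mp hx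
  intro h
  cases eq_f_of_node_mem_L17 h
  exact absurd hs (by decide)

theorem exists_forall_mem_tres_L17 {c : Ctx Symb4 ar4} {x : Term Symb4 ar4}
    (hx : x ∈ constTerms) (hc : x ∈ tres L17 c) :
    ∃ s, ∀ y ∈ constTerms, y ≠ s → y ∈ tres L17 c := by
  cases c with
  | hole => exact absurd hc (constTerm_notMem_L17 hx)
  | node g i c sib =>
    obtain rfl := eq_f_of_node_mem_L17 hc
    have hchildren := (node_mem_L17_iff _).mp hc
    obtain rfl : c = .hole := by
      obtain ⟨s, ch, hs, hfill⟩ := mem_constTerms_iff.mp (by simpa using hchildren.1 i)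
      exact Ctx.eq_hole_of_fill_eq_node hfill hs
    fin_cases i
    · refine ⟨sib 1 (by decide), fun y hy hys => (node_mem_L17_iff _).mpr ?_⟩
      simp_all [Ctx.fill]
    · refine ⟨sib 0 (by decide), fun y hy hys => (node_mem_L17_iff _).mpr ?_⟩
      simp_all [Ctx.fill, Ne.symm hys]

theorem IsTDRFTA.exists_forall_accepts_of_lang_eq_L17 {Q : Type} {A : TDTA Symb4 ar4 Q}
    (hA : IsTDRFTA A) (hL : A.lang = L17) {q : Q} {x : Term Symb4 ar4} (hx : x ∈ constTerms)
    (h : A.Accepts q x) : ∃ s, ∀ y ∈ constTerms, y ≠ s → A.Accepts q y := by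
  obtain ⟨c, hc⟩ := hA q
  rw [hL, Set.ext_iff] at hc
  obtain ⟨s, hs⟩ := exists_forall_mem_tres_L17 hx ((hc x).mp h)
  exact ⟨s, fun y hy hys => (hc y).mpr (hs y hy hys)⟩

deriving instance DecidableEq for Symb4

instance : Fintype Symb4 := ⟨{.f, .a, .b, .c}, fun x => by cases x <;> decide⟩

/-- The state `some s` accepts the constant `s`; the initial state `none` hands two
distinct constant states to the children of the root `f`. -/
def L17Automaton : TDTA Symb4 ar4 (Option Symb4) where
  initial := {none}
  rules g q qs := match q with
    | none => g = .f ∧ Function.Injective qs ∧ ∀ j, qs j ≠ none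
    | some s => g = s ∧ ar4 g = 0

theorem L17Automaton.accepts_some_iff {s : Symb4} {t : Term Symb4 ar4} :
    L17Automaton.Accepts (some s) t ↔ t ∈ constTerms ∧ t.root = s := by
  rw [mem_constTerms_iff]
  constructor
  · rintro ⟨⟨rfl, hs⟩, -⟩
    exact ⟨⟨_, _, hs, rfl⟩, rfl⟩
  · rintro ⟨⟨s, ch, hs, rfl⟩, rfl⟩
    exact .node (qs := fun _ => none) ⟨rfl, hs⟩ fun j => (hs ▸ j).elim0

theorem L17Automaton.accepts_none_iff (ch : Fin 2 → Term Symb4 ar4) :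
    L17Automaton.Accepts none (.node .f ch) ↔ (∀ j, ch j ∈ constTerms) ∧ ch 0 ≠ ch 1 := by
  constructor
  · rintro @⟨_, _, qs, _, ⟨-, hinj, hsome⟩, hchildren⟩
    have hqs j : ch j ∈ constTerms ∧ qs j = some (ch j).root := by
      obtain ⟨s, hs⟩ := Option.ne_none_iff_exists'.mp (hsome j)
      obtain ⟨hconst, rfl⟩ := accepts_some_iff.mp (hs ▸ hchildren j)
      exact ⟨hconst, hs⟩
    refine ⟨fun j => (hqs j).1, fun h => (Fin.injective_two_iff _).mp hinj ?_⟩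
    rw [(hqs 0).2, (hqs 1).2, h]
  · rintro ⟨hconst, hne⟩
    refine .node (f := .f) (qs := fun j => some (ch j).root) ?_
      fun j => accepts_some_iff.mpr ⟨hconst j, rfl⟩
    refine ⟨rfl, (Fin.injective_two_iff _).mpr fun h => hne ?_, fun _ => Option.some_ne_none _⟩
    exact root_injOn_constTerms (hconst 0) (hconst 1) (Option.some_injective _ h)

theorem L17Automaton.lang_eq : L17Automaton.lang = L17 := by
  ext ⟨g, ch⟩
  constructor
  · rintro ⟨_, rfl, h⟩
    obtain rfl : g = .f := by cases h with | node hr => exact hr.1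
    exact (node_mem_L17_iff ch).mpr ((accepts_none_iff ch).mp h)
  · intro h
    obtain rfl := eq_f_of_node_mem_L17 h
    exact ⟨none, rfl, (accepts_none_iff ch).mpr ((node_mem_L17_iff ch).mp h)⟩

/-- `L′` is regular (it is recognized by some ↓-FTA) but it is not
recognized by any top-down residual finite tree automaton; hence the class of
↓-RFTA-recognizable languages is strictly contained in the regular tree languages. -/
theorem L17_not_TDRFTA_recognizable :
    (∃ (Q : Type) (_ : Fintype Q) (A : TDTA Symb4 ar4 Q), A.lang = L17) ∧
    (∀ (Q : Type) [Fintype Q], ∀ A : TDTA Symb4 ar4 Q, IsTDRFTA A → A.lang ≠ L17) := by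
  refine ⟨⟨Option Symb4, inferInstance, L17Automaton, L17Automaton.lang_eq⟩,
    fun Q _ A hA hlang => ?_⟩
  obtain ⟨q, hq, hacc⟩ : .node .f (pair4 tA tB) ∈ A.lang :=
    hlang ▸ pair4_mem_L17_iff.mpr ⟨by simp [constTerms], by simp [constTerms], tA_ne_tB⟩
  cases hacc with | node hrule hchildren =>
  obtain ⟨s₀, hs₀⟩ :=
    hA.exists_forall_accepts_of_lang_eq_L17 hlang (x := tA) (by simp [constTerms]) (hchildren 0)
  obtain ⟨s₁, hs₁⟩ :=
    hA.exists_forall_accepts_of_lang_eq_L17 hlang (x := tB) (by simp [constTerms]) (hchildren 1)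
  obtain ⟨t, ht, ht₀, ht₁⟩ := exists_mem_constTerms_ne_ne s₀ s₁
  have hdiag : .node .f (fun _ => t) ∈ A.lang :=
    ⟨q, hq, .node hrule (Fin.forall_fin_two.mpr ⟨hs₀ t ht ht₀, hs₁ t ht ht₁⟩)⟩
  rw [hlang] at hdiag
  exact ((node_mem_L17_iff _).mp hdiag).2 rfl
end

section
/- Let A = (Q, F, I, Δ) be a top-down residual finite tree automaton recognizing a tree language L. Then for every prime top-down residual c⁻¹L of L there exists a state q ∈ Q such that L_q = c⁻¹L. -/
/-- A top-down residual is composite iff it is the union of the top-down residuals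
of `L` that it strictly contains. -/
def IsCompositeTRes {F : Type} {arity : F → ℕ} (L : Set (Term F arity))
    (c : Ctx F arity) : Prop :=
  tres L c = ⋃ c' ∈ {c' : Ctx F arity | tres L c' ⊂ tres L c}, tres L c'

/-- A top-down residual is prime iff it is not composite. -/
def IsPrimeTRes {F : Type} {arity : F → ℕ} (L : Set (Term F arity))
    (c : Ctx F arity) : Prop := ¬ IsCompositeTRes L c

/-- The canonical top-down automaton of `L`, given a family `cq` of representative contexts
(one per prime top-down residual of `L`): initial states are the `q` with `c_q⁻¹L ⊆ L`, and
the rules are the `q(f) → f(q₁,…,qₙ)` such that `c_q[f(t₁,…,tₙ)] ∈ L` whenever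
`tᵢ ∈ c_{qᵢ}⁻¹L` for all `i`. -/
def canonTD {F : Type} {arity : F → ℕ} (L : Set (Term F arity)) {Q : Type}
    (cq : Q → Ctx F arity) : TDTA F arity Q where
  initial := {q | tres L (cq q) ⊆ L}
  rules f q qs := ∀ ts : Fin (arity f) → Term F arity,
    (∀ i, ts i ∈ tres L (cq (qs i))) → Ctx.fill (cq q) (.node f ts) ∈ L

lemma accepts_fill_iff {F Q : Type} {arity : F → ℕ} (A : TDTA F arity Q)
    (c : Ctx F arity) (q : Q) (t : Term F arity) :
    A.Accepts q (c.fill t) ↔ ∃ q', A.CtxReach q c q' ∧ A.Accepts q' t := by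
  induction c generalizing q with
  | hole =>
    constructor
    · intro h; exact ⟨q, .hole q, h⟩
    · rintro ⟨q', hr, ha⟩; cases hr; exact ha
  | node f i c sib ih =>
    constructor
    · intro h
      rw [Ctx.fill] at h
      cases h with
      | node hr hc =>
        rename_i qs
        have hi : A.Accepts (qs i) (c.fill t) := by simpa using hc i
        obtain ⟨q', hr', ha⟩ := (ih (qs i)).1 hi
        refine ⟨q', .node hr hr' ?_, ha⟩
        intro j hj
        have := hc j
        simpa [hj] using this
    · rintro ⟨q', hr, ha⟩
      cases hr with
      | node hrule hreach hsib =>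
        rename_i qs
        rw [Ctx.fill]
        refine .node hrule ?_
        intro j
        by_cases hj : j = i
        · subst hj; rw [dif_pos rfl]; exact (ih _).2 ⟨q', hreach, ha⟩
        · rw [dif_neg hj]; exact hsib j hj

lemma stateLang_subset_tres {F Q : Type} {arity : F → ℕ} (A : TDTA F arity Q)
    {c : Ctx F arity} {q : Q} (hq : q ∈ A.Qc c) :
    A.stateLang q ⊆ tres A.lang c := by
  obtain ⟨qi, hqi, hreach⟩ := hq
  intro t ht
  exact ⟨qi, hqi, (accepts_fill_iff A c qi t).2 ⟨q, hreach, ht⟩⟩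

lemma tres_eq_union {F Q : Type} {arity : F → ℕ} (A : TDTA F arity Q)
    (c : Ctx F arity) :
    tres A.lang c = ⋃ q ∈ A.Qc c, A.stateLang q := by
  ext t
  simp only [Set.mem_iUnion]
  constructor
  · rintro ⟨qi, hqi, hacc⟩
    obtain ⟨q', hr, ha⟩ := (accepts_fill_iff A c qi t).1 hacc
    exact ⟨q', ⟨qi, hqi, hr⟩, ha⟩
  · rintro ⟨q, hq, ht⟩
    exact stateLang_subset_tres A hq ht

/-- If `A` is a ↓-RFTA recognizing `L`, then every prime top-down
residual of `L` is the state language of some state of `A`. -/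
theorem tdrfta_prime_residual_is_stateLang {F Q : Type} [Fintype F] [Fintype Q]
    {arity : F → ℕ} (_hconst : ∃ a : F, arity a = 0)
    (A : TDTA F arity Q) (hA : IsTDRFTA A)
    (L : Set (Term F arity)) (hAL : A.lang = L)
    (c : Ctx F arity) (hp : IsPrimeTRes L c) :
    ∃ q : Q, A.stateLang q = tres L c := by
  subst hAL
  by_contra hno
  push_neg at hno
  apply hp
  unfold IsCompositeTRes
  apply Set.Subset.antisymm
  · intro t ht
    rw [tres_eq_union A c] at ht
    simp only [Set.mem_iUnion] at ht
    obtain ⟨q, hq, htq⟩ := ht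
    obtain ⟨cq, hcq⟩ := hA q
    have hsub : tres A.lang cq ⊆ tres A.lang c := hcq ▸ stateLang_subset_tres A hq
    have hssub : tres A.lang cq ⊂ tres A.lang c :=
      ⟨hsub, fun h => hno q (hcq.trans (Set.Subset.antisymm hsub h))⟩
    simp only [Set.mem_iUnion]
    exact ⟨cq, hssub, hcq ▸ htq⟩
  · intro t ht
    simp only [Set.mem_iUnion] at ht
    obtain ⟨c', hc', ht'⟩ := ht
    exact hc'.1 ht'
end
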